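/- Let S be an additive subgroup of ℝ² such that every element (x, y) ∈ S satisfies x·y ≤ 0. Then S is contained in a line through the origin; that is, any two elements of S are linearly dependent over ℝ. -/

import Mathlib

/-!
If `u, v ∈ S` were linearly independent, some real combination `a • u + b • v` would lie in the
open positive quadrant. The integer combinations `⌊N a⌋ • u + ⌊N b⌋ • v`, rescaled by `1 / N`,
converge to it, so one of them lies in the quadrant as well; it belongs to `S` and has
positive coordinates, contradicting `x * y ≤ 0`.
-/

open Filter Topology

theorem tendsto_intFloor_mul_div_atTop (a : ℝ) :
    Tendsto (fun N : ℕ ↦ (⌊N * a⌋ : ℝ) / N) atTop (𝓝 a) := by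
  have lower : Tendsto (fun N : ℕ ↦ a - 1 / (N : ℝ)) atTop (𝓝 a) := by
    simpa using tendsto_const_nhds.sub (tendsto_one_div_atTop_nhds_zero_nat (𝕜 := ℝ))
  refine tendsto_of_tendsto_of_tendsto_of_le_of_le' lower tendsto_const_nhds ?_ ?_
  all_goals
    filter_upwards [eventually_gt_atTop 0] with N hN
    have hN' : (0 : ℝ) < N := Nat.cast_pos.2 hN
  · rw [show a - 1 / (N : ℝ) = (N * a - 1) / N by field_simp]
    gcongr
    linarith [Int.lt_floor_add_one ((N : ℝ) * a)]
  · rw [div_le_iff₀ hN', mul_comm]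
    exact Int.floor_le _

theorem exists_zsmul_add_zsmul_mem_of_isOpen_of_smul_mem {E : Type*} [AddCommGroup E]
    [Module ℝ E] [TopologicalSpace E] [ContinuousAdd E] [ContinuousSMul ℝ E] {K : Set E}
    (hK : IsOpen K) (hcone : ∀ t : ℝ, 0 < t → ∀ x ∈ K, t • x ∈ K) {u v : E} {a b : ℝ}
    (hab : a • u + b • v ∈ K) : ∃ m n : ℤ, m • u + n • v ∈ K := by
  have approx : Tendsto (fun N : ℕ ↦ ((⌊N * a⌋ : ℝ) / N) • u + ((⌊N * b⌋ : ℝ) / N) • v)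
      atTop (𝓝 (a • u + b • v)) :=
    ((tendsto_intFloor_mul_div_atTop a).smul_const u).add
      ((tendsto_intFloor_mul_div_atTop b).smul_const v)
  obtain ⟨N, hNK, hN⟩ :=
    ((approx.eventually (hK.mem_nhds hab)).and (eventually_gt_atTop 0)).exists
  refine ⟨⌊N * a⌋, ⌊N * b⌋, ?_⟩
  have hN' : (N : ℝ) ≠ 0 := Nat.cast_ne_zero.2 hN.ne'
  simpa [smul_add, smul_smul, mul_div_cancel₀ _ hN', ← Int.cast_smul_eq_zsmul ℝ]
    using hcone N (Nat.cast_pos.2 hN) _ hNK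

theorem LinearIndependent.span_pair_eq_top {K V : Type*} [DivisionRing K] [AddCommGroup V]
    [Module K V] (hV : Module.finrank K V = 2) {u v : V} (hind : LinearIndependent K ![u, v]) :
    Submodule.span K {u, v} = ⊤ := by
  have := hind.span_eq_top_of_card_eq_finrank (by simp [hV])
  rwa [Matrix.range_cons, Matrix.range_cons, Matrix.range_empty, Set.union_empty,
    Set.singleton_union] at this

/-- If `S` is an additive subgroup of `ℝ²` all of whose elements `(x, y)` satisfy
`x * y ≤ 0`, then any two elements of `S` are linearly dependent over `ℝ`,
i.e. `S` is contained in a line through the origin. -/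
theorem subgroup_nonpositive_product_contained_in_line
    (S : AddSubgroup (ℝ × ℝ)) (h : ∀ s ∈ S, s.1 * s.2 ≤ 0) :
    ∀ u ∈ S, ∀ v ∈ S, ∃ a b : ℝ, (a, b) ≠ (0, 0) ∧ a • u + b • v = 0 := by
  intro u hu v hv
  by_contra hdep
  have hind : LinearIndependent ℝ ![u, v] :=
    LinearIndependent.pair_iff.2 fun s t hst ↦ by
      by_contra hst0
      exact hdep ⟨s, t, by simpa [not_and_or] using hst0, hst⟩
  obtain ⟨a, b, hab⟩ := Submodule.mem_span_pair.1
    ((hind.span_pair_eq_top (by simp)) ▸ Submodule.mem_top : ((1, 1) : ℝ × ℝ) ∈ _)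
  set K : Set (ℝ × ℝ) := {p | 0 < p.1 ∧ 0 < p.2}
  have hK : IsOpen K :=
    (isOpen_lt continuous_const continuous_fst).inter (isOpen_lt continuous_const continuous_snd)
  have hcone : ∀ t : ℝ, 0 < t → ∀ p ∈ K, t • p ∈ K :=
    fun t ht p hp ↦ ⟨mul_pos ht hp.1, mul_pos ht hp.2⟩
  obtain ⟨m, n, hmn⟩ := exists_zsmul_add_zsmul_mem_of_isOpen_of_smul_mem hK hcone
    (hab ▸ ⟨one_pos, one_pos⟩ : a • u + b • v ∈ K)
  exact (h _ (S.add_mem (S.zsmul_mem hu m) (S.zsmul_mem hv n))).not_gt (mul_pos hmn.1 hmn.2)
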